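/- (Objective value violations.) Let x* ∈ X be an optimal solution of min{ f(x) : g_k(x) ≤ 0 ∀k, x ∈ X }, let λ* ≥ 0 (componentwise) satisfy inf_{x ∈ X}( f(x) + Σ_k λ*_k g_k(x) ) = f(x*), and set D = β² + L_f + 2‖λ*‖‖L_g‖ + 2C‖L_g‖. If the step size γ > 0 satisfies D + ‖L_g‖·R/√γ − 1/γ ≤ 0, then for every t ≥ 1 the running average x̄(t) = (1/t) Σ_{τ=0}^{t−1} x(τ) satisfies f(x̄(t)) ≤ f(x*) + (1/t)·R²/(2γ). -/

import Mathlib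

/-!
Each iteration is a projected gradient step on the Lagrangian `f + ⟪Q(t) + g(x(t-1)), g⟫`, whose
gradient is Lipschitz with constant `L_f + ⟪Q(t) + g(x(t-1)), L_g⟫`. While
`‖Q(t)‖ ≤ 2‖λ*‖ + C + R/√γ`, the step-size condition bounds that constant plus `β²` by `1/γ`, and
the descent lemma, the variational inequality of the projection and the drift of the virtual
queues give the drift-plus-penalty inequality
`Δ(t) + f(x(t)) ≤ f(x*) + (‖x* - x(t-1)‖² - ‖x* - x(t)‖²)/(2γ) + (‖g(x(t))‖² - ‖g(x(t-1))‖²)/2`,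
where `Δ(t) = (‖Q(t+1)‖² - ‖Q(t)‖²)/2`. It telescopes. The dual bound `f(x*) ≤ f(x) + ⟪λ*, g(x)⟫`
together with `∑_τ g(x(τ)) ≤ Q(t)` turns the summed inequality into a quadratic inequality in
`‖Q(t)‖`, which propagates the queue bound by strong induction. Finally `‖g(x(t))‖ ≤ ‖Q(t+1)‖`
leaves `∑_{τ<t} f(x(τ)) ≤ t f(x*) + R²/(2γ)`, and Jensen's inequality concludes.
-/

/-- The stacked constraint vector `g(x) = (g_1(x), …, g_m(x))` as an element of
Euclidean space `ℝ^m`. -/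
noncomputable def gvec {n m : ℕ} (g : Fin m → EuclideanSpace ℝ (Fin n) → ℝ)
    (x : EuclideanSpace ℝ (Fin n)) : EuclideanSpace ℝ (Fin m) :=
  WithLp.toLp 2 (fun k => g k x)

open Set Finset
open scoped RealInnerProductSpace

section FirstOrder

variable {E : Type*} [NormedAddCommGroup E] [InnerProductSpace ℝ E]

theorem HasGradientAt.hasDerivAt_comp_add_smul [CompleteSpace E] {ψ : E → ℝ} {G a v : E}
    {s : ℝ} (h : HasGradientAt ψ G (a + s • v)) :
    HasDerivAt (fun s : ℝ => ψ (a + s • v)) ⟪G, v⟫ s := by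
  have hline : HasDerivAt (fun s : ℝ => a + s • v) v s := by
    simpa using ((hasDerivAt_id s).smul_const v).const_add a
  exact h.hasFDerivAt.comp_hasDerivAt s hline

theorem ConvexOn.add_inner_le_of_hasGradientAt [CompleteSpace E] {X : Set E} {ψ : E → ℝ}
    {G a b : E} (hψ : ConvexOn ℝ X ψ) (hG : HasGradientAt ψ G a) (ha : a ∈ X) (hb : b ∈ X) :
    ψ a + ⟪G, b - a⟫ ≤ ψ b := by
  let line : ℝ →ᵃ[ℝ] E := AffineMap.lineMap a b
  have hline (s : ℝ) : line s = a + s • (b - a) := by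
    simp [line, AffineMap.lineMap_apply, add_comm]
  have hderiv : HasDerivAt (ψ ∘ line) ⟪G, b - a⟫ 0 := by
    have : HasGradientAt ψ G (a + (0 : ℝ) • (b - a)) := by simpa using hG
    simpa only [Function.comp_def, hline] using this.hasDerivAt_comp_add_smul
  have hslope := (hψ.comp_affineMap line).le_slope_of_hasDerivAt
    (by simpa [hline] using ha) (by simpa [hline] using hb) zero_lt_one hderiv
  simp only [slope_def_field, Function.comp_apply, hline, one_smul, zero_smul, add_sub_cancel,
    add_zero, sub_zero, div_one] at hslope
  linarith

theorem le_add_inner_add_of_lipschitzOn_gradient [CompleteSpace E] {X : Set E}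
    (hX : Convex ℝ X) {ψ : E → ℝ} {G : E → E} {L : ℝ} (hG : ∀ z ∈ X, HasGradientAt ψ (G z) z)
    (hGL : ∀ z ∈ X, ∀ w ∈ X, ‖G z - G w‖ ≤ L * ‖z - w‖) {a b : E} (ha : a ∈ X) (hb : b ∈ X) :
    ψ b ≤ ψ a + ⟪G a, b - a⟫ + L / 2 * ‖b - a‖ ^ 2 := by
  set v := b - a
  have hseg : ∀ s ∈ Icc (0 : ℝ) 1, a + s • v ∈ X := fun s hs => by
    have := hX.lineMap_mem ha hb hs
    rwa [AffineMap.lineMap_apply, vsub_eq_sub, vadd_eq_add, add_comm] at this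
  let h : ℝ → ℝ := fun s => ψ (a + s • v) - s * ⟪G a, v⟫ - L / 2 * s ^ 2 * ‖v‖ ^ 2
  have hderiv : ∀ s ∈ Icc (0 : ℝ) 1,
      HasDerivAt h (⟪G (a + s • v), v⟫ - ⟪G a, v⟫ - L * s * ‖v‖ ^ 2) s := fun s hs => by
    have := (((hG _ (hseg s hs)).hasDerivAt_comp_add_smul).sub
      ((hasDerivAt_id s).mul_const ⟪G a, v⟫)).sub
      (((hasDerivAt_pow 2 s).const_mul (L / 2)).mul_const (‖v‖ ^ 2))
    exact this.congr_deriv (by simp only [one_mul, Nat.cast_ofNat, Nat.reduceSub, pow_one]; ring)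
  have hderiv_nonpos : ∀ s ∈ Icc (0 : ℝ) 1,
      ⟪G (a + s • v), v⟫ - ⟪G a, v⟫ - L * s * ‖v‖ ^ 2 ≤ 0 := fun s hs => by
    have hLip := hGL _ (hseg s hs) a ha
    rw [add_sub_cancel_left, norm_smul, Real.norm_of_nonneg hs.1] at hLip
    have hcs := real_inner_le_norm (G (a + s • v) - G a) v
    rw [inner_sub_left] at hcs
    nlinarith [norm_nonneg v]
  have hanti : AntitoneOn h (Icc 0 1) :=
    antitoneOn_of_hasDerivWithinAt_nonpos (convex_Icc 0 1)
      (fun s hs => (hderiv s hs).continuousAt.continuousWithinAt)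
      (fun s hs => (hderiv s (interior_subset hs)).hasDerivWithinAt)
      (fun s hs => hderiv_nonpos s (interior_subset hs))
  have h01 := hanti (left_mem_Icc.2 zero_le_one) (right_mem_Icc.2 zero_le_one) zero_le_one
  simp only [h, v, one_smul, zero_smul, add_sub_cancel, add_zero, one_mul, one_pow, mul_one,
    zero_mul, ne_eq, OfNat.ofNat_ne_zero, not_false_eq_true, zero_pow, mul_zero, sub_zero] at h01
  linarith

theorem real_inner_sub_sub_nonpos_of_forall_norm_sub_le {X : Set E} (hX : Convex ℝ X)
    {c p : E} (hp : p ∈ X) (hmin : ∀ y ∈ X, ‖p - c‖ ≤ ‖y - c‖) {y : E} (hy : y ∈ X) :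
    ⟪c - p, y - p⟫ ≤ 0 := by
  have : Nonempty X := ⟨⟨p, hp⟩⟩
  refine (norm_eq_iInf_iff_real_inner_le_zero hX hp).1 ?_ y hy
  refine le_antisymm (le_ciInf fun w => ?_) (ciInf_le (f := fun w : X => ‖c - w‖)
    (bddBelow_def.2 ⟨0, forall_mem_range.2 fun w => norm_nonneg _⟩) ⟨p, hp⟩)
  simpa only [norm_sub_rev c] using hmin w w.2

theorem le_add_of_projected_gradient_step {X : Set E} (hX : Convex ℝ X) {φ : E → ℝ}
    {G a p y : E} {L γ : ℝ} (hγ : 0 < γ) (hp : p ∈ X)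
    (hproj : ∀ z ∈ X, ‖p - (a - γ • G)‖ ≤ ‖z - (a - γ • G)‖) (hy : y ∈ X)
    (hconv : φ a + ⟪G, y - a⟫ ≤ φ y) (hsmooth : φ p ≤ φ a + ⟪G, p - a⟫ + L / 2 * ‖p - a‖ ^ 2) :
    φ p ≤ φ y + (‖y - a‖ ^ 2 - ‖y - p‖ ^ 2) / (2 * γ) + (L - 1 / γ) / 2 * ‖p - a‖ ^ 2 := by
  have hvar := real_inner_sub_sub_nonpos_of_forall_norm_sub_le hX hp hproj hy
  rw [show a - γ • G - p = (a - p) - γ • G by abel, inner_sub_left, real_inner_smul_left] at hvar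
  have hpolar : ‖y - a‖ ^ 2 = ‖y - p‖ ^ 2 - 2 * ⟪a - p, y - p⟫ + ‖p - a‖ ^ 2 := by
    rw [show y - a = (y - p) - (a - p) by abel, norm_sub_sq_real, real_inner_comm,
      norm_sub_rev a p]
  have hsplit : ⟪G, p - a⟫ = ⟪G, y - a⟫ - ⟪G, y - p⟫ := by
    rw [← inner_sub_right]; congr 1; abel
  have hscaled : γ * (φ p - φ y) ≤
      (‖y - a‖ ^ 2 - ‖y - p‖ ^ 2) / 2 + (γ * L - 1) / 2 * ‖p - a‖ ^ 2 := by
    nlinarith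
  have hdiv : φ p - φ y ≤
      ((‖y - a‖ ^ 2 - ‖y - p‖ ^ 2) / 2 + (γ * L - 1) / 2 * ‖p - a‖ ^ 2) / γ := by
    rw [le_div_iff₀ hγ]; linarith
  calc φ p = φ y + (φ p - φ y) := by ring
    _ ≤ φ y + ((‖y - a‖ ^ 2 - ‖y - p‖ ^ 2) / 2 + (γ * L - 1) / 2 * ‖p - a‖ ^ 2) / γ := by
      gcongr
    _ = _ := by field_simp; ring

end FirstOrder

section Lagrangian

variable {E ι : Type*} [Fintype ι]

def lagrangian (f : E → ℝ) (g : ι → E → ℝ) (c : ι → ℝ) (z : E) : ℝ :=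
  f z + ∑ k, c k * g k z

variable {f : E → ℝ} {g : ι → E → ℝ} {c : ι → ℝ}

theorem lagrangian_le_of_nonpos {y : E} (hc : ∀ k, 0 ≤ c k) (hy : ∀ k, g k y ≤ 0) :
    lagrangian f g c y ≤ f y := by
  have : ∑ k, c k * g k y ≤ 0 :=
    sum_nonpos fun k _ => mul_nonpos_of_nonneg_of_nonpos (hc k) (hy k)
  simp only [lagrangian]; linarith

variable [NormedAddCommGroup E] [InnerProductSpace ℝ E] {Gf a b : E} {Gg : ι → E}

theorem real_inner_add_sum_smul_left (v : E) :
    ⟪Gf + ∑ k, c k • Gg k, v⟫ = ⟪Gf, v⟫ + ∑ k, c k * ⟪Gg k, v⟫ := by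
  simp [inner_add_left, sum_inner, real_inner_smul_left]

theorem lagrangian_add_inner_le (hc : ∀ k, 0 ≤ c k) (hf : f a + ⟪Gf, b - a⟫ ≤ f b)
    (hg : ∀ k, g k a + ⟪Gg k, b - a⟫ ≤ g k b) :
    lagrangian f g c a + ⟪Gf + ∑ k, c k • Gg k, b - a⟫ ≤ lagrangian f g c b := by
  have hsum : ∑ k, c k * (g k a + ⟪Gg k, b - a⟫) ≤ ∑ k, c k * g k b :=
    sum_le_sum fun k _ => mul_le_mul_of_nonneg_left (hg k) (hc k)
  simp only [lagrangian, real_inner_add_sum_smul_left, mul_add, sum_add_distrib] at hsum ⊢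
  linarith

theorem lagrangian_le_add_inner_add {Lf : ℝ} {Lg : ι → ℝ} (hc : ∀ k, 0 ≤ c k)
    (hf : f b ≤ f a + ⟪Gf, b - a⟫ + Lf / 2 * ‖b - a‖ ^ 2)
    (hg : ∀ k, g k b ≤ g k a + ⟪Gg k, b - a⟫ + Lg k / 2 * ‖b - a‖ ^ 2) :
    lagrangian f g c b ≤ lagrangian f g c a + ⟪Gf + ∑ k, c k • Gg k, b - a⟫ +
      (Lf + ∑ k, c k * Lg k) / 2 * ‖b - a‖ ^ 2 := by
  have hsum : ∑ k, c k * g k b ≤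
      ∑ k, c k * (g k a + ⟪Gg k, b - a⟫ + Lg k / 2 * ‖b - a‖ ^ 2) :=
    sum_le_sum fun k _ => mul_le_mul_of_nonneg_left (hg k) (hc k)
  have hL : (Lf + ∑ k, c k * Lg k) / 2 * ‖b - a‖ ^ 2 =
      Lf / 2 * ‖b - a‖ ^ 2 + ∑ k, c k * (Lg k / 2 * ‖b - a‖ ^ 2) := by
    rw [add_div, add_mul, sum_div, sum_mul]
    congr 1
    exact sum_congr rfl fun k _ => by ring
  simp only [lagrangian, real_inner_add_sum_smul_left, hL, mul_add, sum_add_distrib] at hsum ⊢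
  linarith

structure IsSmoothConvexOn [CompleteSpace E] (X : Set E) (ψ : E → ℝ) (G : E → E) (L : ℝ) :
    Prop where
  convexOn : ConvexOn ℝ X ψ
  hasGradientAt : ∀ z ∈ X, HasGradientAt ψ (G z) z
  lipschitz : ∀ z ∈ X, ∀ w ∈ X, ‖G z - G w‖ ≤ L * ‖z - w‖

theorem lagrangian_le_of_projected_gradient_step [CompleteSpace E] {X : Set E}
    (hX : Convex ℝ X) {Gf : E → E} {Lf : ℝ} {Gg : ι → E → E} {Lg : ι → ℝ} {γ : ℝ} {p y : E}
    (hf : IsSmoothConvexOn X f Gf Lf) (hg : ∀ k, IsSmoothConvexOn X (g k) (Gg k) (Lg k))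
    (hc : ∀ k, 0 ≤ c k) (hγ : 0 < γ) (ha : a ∈ X) (hp : p ∈ X) (hy : y ∈ X)
    (hproj : ∀ z ∈ X, ‖p - (a - γ • (Gf a + ∑ k, c k • Gg k a))‖ ≤
      ‖z - (a - γ • (Gf a + ∑ k, c k • Gg k a))‖) :
    lagrangian f g c p ≤ lagrangian f g c y + (‖y - a‖ ^ 2 - ‖y - p‖ ^ 2) / (2 * γ) +
      (Lf + ∑ k, c k * Lg k - 1 / γ) / 2 * ‖p - a‖ ^ 2 := by
  refine le_add_of_projected_gradient_step hX hγ hp hproj hy ?_ ?_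
  · exact lagrangian_add_inner_le hc
      (hf.convexOn.add_inner_le_of_hasGradientAt (hf.hasGradientAt a ha) ha hy)
      fun k => (hg k).convexOn.add_inner_le_of_hasGradientAt ((hg k).hasGradientAt a ha) ha hy
  · exact lagrangian_le_add_inner_add hc
      (le_add_inner_add_of_lipschitzOn_gradient hX hf.hasGradientAt hf.lipschitz ha hp)
      fun k => le_add_inner_add_of_lipschitzOn_gradient hX (hg k).hasGradientAt
        (hg k).lipschitz ha hp

end Lagrangian

theorem le_two_mul_add_add_of_sq_le {q l c r : ℝ} (hl : 0 ≤ l) (hc : 0 ≤ c) (hr : 0 ≤ r)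
    (h : q ^ 2 ≤ 2 * l * q + c ^ 2 + r ^ 2) : q ≤ 2 * l + c + r := by
  nlinarith [mul_nonneg hc hr, mul_nonneg hl hc, mul_nonneg hl hr]

theorem add_sum_range_le_of_telescoping {V W e F : ℕ → ℝ} {c γ R : ℝ} {T : ℕ} (hγ : 0 < γ)
    (hstep : ∀ τ < T,
      V (τ + 1) - V τ + F τ ≤ c + (e τ - e (τ + 1)) / (2 * γ) + (W (τ + 1) - W τ))
    (hV0 : V 0 ≤ W 0) (he0 : e 0 ≤ R ^ 2) (heT : 0 ≤ e T) :
    V T + ∑ τ ∈ range T, F τ ≤ T * c + R ^ 2 / (2 * γ) + W T := by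
  have hsum := sum_le_sum fun τ hτ => hstep τ (mem_range.1 hτ)
  simp only [sum_add_distrib, ← sum_div, sum_range_sub V, sum_range_sub W,
    sum_range_sub' e, sum_const, card_range, nsmul_eq_mul] at hsum
  have he : (e 0 - e T) / (2 * γ) ≤ R ^ 2 / (2 * γ) := by gcongr; linarith
  linarith

theorem ConvexOn.map_inv_smul_sum_range_le_of_sum_le {E : Type*} [AddCommGroup E]
    [Module ℝ E] {s : Set E} {φ : E → ℝ} (hφ : ConvexOn ℝ s φ) {p : ℕ → E} (hp : ∀ τ, p τ ∈ s)
    {T : ℕ} (hT : 1 ≤ T) {c K : ℝ} (hsum : ∑ τ ∈ range T, φ (p τ) ≤ T * c + K) :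
    φ ((T : ℝ)⁻¹ • ∑ τ ∈ range T, p τ) ≤ c + 1 / T * K := by
  have hTpos : (0 : ℝ) < T := by exact_mod_cast hT
  have hjensen := hφ.map_sum_le (t := range T) (w := fun _ => (T : ℝ)⁻¹)
    (fun _ _ => by positivity)
    (by rw [sum_const, card_range, nsmul_eq_mul, mul_inv_cancel₀ hTpos.ne']) fun τ _ => hp τ
  simp only [← smul_sum, smul_eq_mul, ← mul_sum] at hjensen
  calc _ ≤ _ := hjensen
    _ ≤ (T : ℝ)⁻¹ * (T * c + K) := by gcongr
    _ = _ := by field_simp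

section VirtualQueue

def virtualQueue (b : ℕ → ℝ) : ℕ → ℝ
  | 0 => max 0 (-b 0)
  | t + 1 => max (-b (t + 1)) (virtualQueue b t + b (t + 1))

variable (b : ℕ → ℝ)

theorem virtualQueue_nonneg : ∀ t, 0 ≤ virtualQueue b t
  | 0 => le_max_left _ _
  | t + 1 => by
    have := virtualQueue_nonneg t
    rcases le_total (b (t + 1)) 0 with h | h
    · exact le_max_of_le_left (by linarith)
    · exact le_max_of_le_right (by linarith)

theorem neg_le_virtualQueue : ∀ t, -b t ≤ virtualQueue b t
  | 0 => le_max_right _ _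
  | _ + 1 => le_max_left _ _

theorem virtualQueue_add_nonneg (t : ℕ) : 0 ≤ virtualQueue b t + b t := by
  linarith [neg_le_virtualQueue b t]

theorem add_le_virtualQueue_succ (t : ℕ) :
    virtualQueue b t + b (t + 1) ≤ virtualQueue b (t + 1) :=
  le_max_right _ _

theorem virtualQueue_zero_le_abs : virtualQueue b 0 ≤ |b 0| :=
  max_le (abs_nonneg _) (neg_le_abs _)

theorem abs_le_virtualQueue_succ (t : ℕ) : |b (t + 1)| ≤ virtualQueue b (t + 1) :=
  abs_le'.2 ⟨by linarith [virtualQueue_nonneg b t, add_le_virtualQueue_succ b t],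
    neg_le_virtualQueue b (t + 1)⟩

theorem sum_range_le_virtualQueue (T : ℕ) : ∑ τ ∈ range T, b (τ + 1) ≤ virtualQueue b T := by
  have hstep : ∀ τ ∈ range T, b (τ + 1) ≤ virtualQueue b (τ + 1) - virtualQueue b τ :=
    fun τ _ => by linarith [add_le_virtualQueue_succ b τ]
  have := sum_le_sum hstep
  rw [sum_range_sub (virtualQueue b)] at this
  linarith [virtualQueue_nonneg b 0]

theorem virtualQueue_succ_sq_sub_sq_le (t : ℕ) :
    virtualQueue b (t + 1) ^ 2 / 2 - virtualQueue b t ^ 2 / 2 ≤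
      virtualQueue b t * b (t + 1) + b (t + 1) ^ 2 := by
  have := virtualQueue_nonneg b t
  simp only [virtualQueue]
  rcases max_cases (-b (t + 1)) (virtualQueue b t + b (t + 1)) with ⟨h, _⟩ | ⟨h, _⟩ <;>
    rw [h] <;> nlinarith [sq_nonneg (virtualQueue b t + b (t + 1))]

end VirtualQueue

section VirtualQueueVec

variable {ι : Type*}

def virtualQueueVec (u : ℕ → EuclideanSpace ℝ ι) (t : ℕ) : EuclideanSpace ℝ ι :=
  WithLp.toLp 2 fun k => virtualQueue (fun s => u s k) t

theorem virtualQueueVec_apply (u : ℕ → EuclideanSpace ℝ ι) (t : ℕ) (k : ι) :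
    virtualQueueVec u t k = virtualQueue (fun s => u s k) t := rfl

theorem eq_virtualQueueVec {u Q : ℕ → EuclideanSpace ℝ ι} (h0 : ∀ k, Q 0 k = max 0 (-u 0 k))
    (hsucc : ∀ t k, Q (t + 1) k = max (-u (t + 1) k) (Q t k + u (t + 1) k)) :
    Q = virtualQueueVec u := by
  funext t
  induction t with
  | zero => ext k; exact h0 k
  | succ t ih => ext k; rw [hsucc, ih]; rfl

variable [Fintype ι]

theorem EuclideanSpace.norm_le_norm_of_abs_le {v w : EuclideanSpace ℝ ι}
    (h : ∀ k, |v k| ≤ |w k|) : ‖v‖ ≤ ‖w‖ := by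
  refine (pow_le_pow_iff_left₀ (norm_nonneg v) (norm_nonneg w) two_ne_zero).1 ?_
  simp only [EuclideanSpace.real_norm_sq_eq]
  exact sum_le_sum fun k _ => sq_le_sq.2 (h k)

theorem EuclideanSpace.real_inner_eq_sum (v w : EuclideanSpace ℝ ι) :
    ⟪v, w⟫ = ∑ k, v k * w k := by
  simp [PiLp.inner_apply, mul_comm]

variable (u : ℕ → EuclideanSpace ℝ ι)

theorem norm_virtualQueueVec_zero_le : ‖virtualQueueVec u 0‖ ≤ ‖u 0‖ :=
  EuclideanSpace.norm_le_norm_of_abs_le fun k => by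
    rw [virtualQueueVec_apply, abs_of_nonneg (virtualQueue_nonneg _ 0)]
    exact virtualQueue_zero_le_abs (fun s => u s k)

theorem norm_le_norm_virtualQueueVec_succ (t : ℕ) :
    ‖u (t + 1)‖ ≤ ‖virtualQueueVec u (t + 1)‖ :=
  EuclideanSpace.norm_le_norm_of_abs_le fun k => by
    rw [virtualQueueVec_apply, abs_of_nonneg (virtualQueue_nonneg _ _)]
    exact abs_le_virtualQueue_succ (fun s => u s k) t

theorem norm_virtualQueueVec_succ_sq_sub_sq_le (t : ℕ) :
    ‖virtualQueueVec u (t + 1)‖ ^ 2 / 2 - ‖virtualQueueVec u t‖ ^ 2 / 2 ≤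
      ⟪virtualQueueVec u t, u (t + 1)⟫ + ‖u (t + 1)‖ ^ 2 := by
  simp only [EuclideanSpace.real_norm_sq_eq, EuclideanSpace.real_inner_eq_sum, sum_div,
    ← sum_sub_distrib, ← sum_add_distrib]
  exact sum_le_sum fun k _ => virtualQueue_succ_sq_sub_sq_le (fun s => u s k) t

theorem sum_range_inner_le_inner_virtualQueueVec {w : EuclideanSpace ℝ ι} (hw : ∀ k, 0 ≤ w k)
    (T : ℕ) : ∑ τ ∈ range T, ⟪w, u (τ + 1)⟫ ≤ ⟪w, virtualQueueVec u T⟫ := by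
  simp only [EuclideanSpace.real_inner_eq_sum, virtualQueueVec_apply]
  rw [sum_comm]
  refine sum_le_sum fun k _ => ?_
  rw [← mul_sum]
  exact mul_le_mul_of_nonneg_left (sum_range_le_virtualQueue (fun s => u s k) T) (hw k)

theorem mul_sub_inner_virtualQueueVec_le_sum {F : ℕ → ℝ} {w : EuclideanSpace ℝ ι} {c : ℝ}
    (hw : ∀ k, 0 ≤ w k) (hdual : ∀ τ, c ≤ F τ + ⟪w, u τ⟫) (T : ℕ) :
    T * c - ⟪w, virtualQueueVec u T⟫ ≤ ∑ τ ∈ range T, F (τ + 1) := by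
  have hqueue := sum_range_inner_le_inner_virtualQueueVec u hw T
  have hsum : ∑ τ ∈ range T, c ≤ ∑ τ ∈ range T, (F (τ + 1) + ⟪w, u (τ + 1)⟫) :=
    sum_le_sum fun τ _ => hdual (τ + 1)
  rw [sum_const, card_range, nsmul_eq_mul, sum_add_distrib] at hsum
  linarith

theorem norm_virtualQueueVec_le_of_sum_le {F : ℕ → ℝ} {w : EuclideanSpace ℝ ι} {c C R γ : ℝ}
    {T : ℕ} (hw : ∀ k, 0 ≤ w k) (hdual : ∀ τ, c ≤ F τ + ⟪w, u τ⟫) (hC : ‖u T‖ ≤ C)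
    (hR : 0 ≤ R) (hγ : 0 < γ)
    (hsum : ‖virtualQueueVec u T‖ ^ 2 / 2 + ∑ τ ∈ range T, F (τ + 1) ≤
      T * c + R ^ 2 / (2 * γ) + ‖u T‖ ^ 2 / 2) :
    ‖virtualQueueVec u T‖ ≤ 2 * ‖w‖ + C + R / √γ := by
  have hlow := mul_sub_inner_virtualQueueVec_le_sum u hw hdual T
  have hcs := real_inner_le_norm w (virtualQueueVec u T)
  have huC : ‖u T‖ ^ 2 ≤ C ^ 2 := pow_le_pow_left₀ (norm_nonneg _) hC 2
  have hr : (R / √γ) ^ 2 = R ^ 2 / (2 * γ) * 2 := by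
    rw [div_pow, Real.sq_sqrt hγ.le]; field_simp
  refine le_two_mul_add_add_of_sq_le (norm_nonneg w) ((norm_nonneg _).trans hC)
    (by positivity) ?_
  rw [hr]
  linarith

end VirtualQueueVec

section DriftPlusPenalty

variable {n m : ℕ} {f : EuclideanSpace ℝ (Fin n) → ℝ} {g : Fin m → EuclideanSpace ℝ (Fin n) → ℝ}

theorem lagrangian_eq_add_inner_gvec (c : EuclideanSpace ℝ (Fin m))
    (z : EuclideanSpace ℝ (Fin n)) : lagrangian f g c z = f z + ⟪c, gvec g z⟫ := by
  simp [lagrangian, EuclideanSpace.real_inner_eq_sum, gvec]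

theorem lagrangian_smoothness_add_sq_le_inv {Q lam Lg : EuclideanSpace ℝ (Fin m)}
    {a : EuclideanSpace ℝ (Fin n)} {Lf β C R γ : ℝ} (hQ : ‖Q‖ ≤ 2 * ‖lam‖ + C + R / √γ)
    (ha : ‖gvec g a‖ ≤ C)
    (hγ : β ^ 2 + Lf + 2 * ‖lam‖ * ‖Lg‖ + 2 * C * ‖Lg‖ + ‖Lg‖ * R / √γ - 1 / γ ≤ 0) :
    Lf + ∑ k, (Q k + g k a) * Lg k + β ^ 2 ≤ 1 / γ := by
  have hinner : ∑ k, (Q k + g k a) * Lg k = ⟪Q + gvec g a, Lg⟫ := by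
    simp [EuclideanSpace.real_inner_eq_sum, gvec]
  have hcs := real_inner_le_norm (Q + gvec g a) Lg
  have hnorm : ‖Q + gvec g a‖ ≤ 2 * ‖lam‖ + 2 * C + R / √γ := by
    linarith [norm_add_le Q (gvec g a)]
  have := mul_le_mul_of_nonneg_right hnorm (norm_nonneg Lg)
  have hexpand : (2 * ‖lam‖ + 2 * C + R / √γ) * ‖Lg‖ =
      2 * ‖lam‖ * ‖Lg‖ + 2 * C * ‖Lg‖ + ‖Lg‖ * R / √γ := by ring
  rw [hinner]
  linarith

theorem drift_plus_penalty_le {X : Set (EuclideanSpace ℝ (Fin n))} (hX : Convex ℝ X)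
    {Gf : EuclideanSpace ℝ (Fin n) → EuclideanSpace ℝ (Fin n)}
    {Gg : Fin m → EuclideanSpace ℝ (Fin n) → EuclideanSpace ℝ (Fin n)} {Lf β γ : ℝ}
    {Lg : Fin m → ℝ} (hf : IsSmoothConvexOn X f Gf Lf)
    (hg : ∀ k, IsSmoothConvexOn X (g k) (Gg k) (Lg k))
    (hgLip : ∀ z ∈ X, ∀ w ∈ X, ‖gvec g z - gvec g w‖ ≤ β * ‖z - w‖) (hγ : 0 < γ)
    {Q Q' : EuclideanSpace ℝ (Fin m)} {a p y : EuclideanSpace ℝ (Fin n)}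
    (ha : a ∈ X) (hp : p ∈ X) (hy : y ∈ X) (hc : ∀ k, 0 ≤ Q k + g k a)
    (hproj : ∀ z ∈ X, ‖p - (a - γ • (Gf a + ∑ k, (Q k + g k a) • Gg k a))‖ ≤
      ‖z - (a - γ • (Gf a + ∑ k, (Q k + g k a) • Gg k a))‖)
    (hdrift : ‖Q'‖ ^ 2 / 2 - ‖Q‖ ^ 2 / 2 ≤ ⟪Q, gvec g p⟫ + ‖gvec g p‖ ^ 2)
    (hL : Lf + ∑ k, (Q k + g k a) * Lg k + β ^ 2 ≤ 1 / γ) (hyfeas : ∀ k, g k y ≤ 0) :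
    ‖Q'‖ ^ 2 / 2 - ‖Q‖ ^ 2 / 2 + f p ≤
      f y + (‖y - a‖ ^ 2 - ‖y - p‖ ^ 2) / (2 * γ) + (‖gvec g p‖ ^ 2 / 2 - ‖gvec g a‖ ^ 2 / 2) := by
  have hstep := lagrangian_le_of_projected_gradient_step hX hf hg hc hγ ha hp hy hproj
  have hlag : lagrangian f g (fun k => Q k + g k a) p =
      f p + ⟪Q, gvec g p⟫ + ⟪gvec g a, gvec g p⟫ := by
    simp only [lagrangian, EuclideanSpace.real_inner_eq_sum, gvec, add_mul, sum_add_distrib,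
      add_assoc]
  have hfeas := lagrangian_le_of_nonpos (f := f) hc hyfeas
  -- Polarising the cross term `⟪g a, g p⟫` yields the telescoping `‖g‖²` terms and a
  -- `-‖g p - g a‖² / 2` that the `β²`-part of the step-size condition absorbs.
  have hpolar := norm_sub_sq_real (gvec g p) (gvec g a)
  rw [real_inner_comm] at hpolar
  have hβsq : ‖gvec g p - gvec g a‖ ^ 2 ≤ β ^ 2 * ‖p - a‖ ^ 2 := by
    rw [← mul_pow]; exact pow_le_pow_left₀ (norm_nonneg _) (hgLip p hp a ha) 2
  have hcoef : (Lf + ∑ k, (Q k + g k a) * Lg k - 1 / γ) / 2 * ‖p - a‖ ^ 2 +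
      β ^ 2 / 2 * ‖p - a‖ ^ 2 ≤ 0 := by
    rw [← add_mul]; exact mul_nonpos_of_nonpos_of_nonneg (by linarith) (by positivity)
  linarith

end DriftPlusPenalty

/-- Indexing convention: `x 0` denotes the initial point `x(−1)` and `x (t+1)`
denotes the iterate `x(t)`; thus at iteration `t` of the paper,
`x(t) = x (t+1)`, `x(t−1) = x t`, and `Q(t) = Q t`. -/
theorem objective_value_violation_bound_general {n m : ℕ}
    (X : Set (EuclideanSpace ℝ (Fin n)))
    (hXcv : Convex ℝ X)
    (R : ℝ) (hR : ∀ z ∈ X, ∀ w ∈ X, ‖z - w‖ ≤ R)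
    (f : EuclideanSpace ℝ (Fin n) → ℝ)
    (Gf : EuclideanSpace ℝ (Fin n) → EuclideanSpace ℝ (Fin n))
    (g : Fin m → EuclideanSpace ℝ (Fin n) → ℝ)
    (Gg : Fin m → EuclideanSpace ℝ (Fin n) → EuclideanSpace ℝ (Fin n))
    (Lf : ℝ) (Lg : EuclideanSpace ℝ (Fin m)) (β C : ℝ)
    (hf : ConvexOn ℝ X f)
    (hfd : ∀ z, HasGradientAt f (Gf z) z)
    (hGfLip : ∀ z ∈ X, ∀ w ∈ X, ‖Gf z - Gf w‖ ≤ Lf * ‖z - w‖)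
    (hg : ∀ k, ConvexOn ℝ X (g k))
    (hgd : ∀ (k : Fin m) z, HasGradientAt (g k) (Gg k z) z)
    (hGgLip : ∀ (k : Fin m), ∀ z ∈ X, ∀ w ∈ X, ‖Gg k z - Gg k w‖ ≤ Lg k * ‖z - w‖)
    (hgLip : ∀ z ∈ X, ∀ w ∈ X, ‖gvec g z - gvec g w‖ ≤ β * ‖z - w‖)
    (hgC : ∀ z ∈ X, ‖gvec g z‖ ≤ C)
    (xstar : EuclideanSpace ℝ (Fin n)) (hxs : xstar ∈ X)
    (hxsFeas : ∀ k, g k xstar ≤ 0)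
    (lam : EuclideanSpace ℝ (Fin m)) (hlam : ∀ k, 0 ≤ lam k)
    (hduality : IsGLB ((fun z => f z + ∑ k, lam k * g k z) '' X) (f xstar))
    (D : ℝ) (hD : D = β ^ 2 + Lf + 2 * ‖lam‖ * ‖Lg‖ + 2 * C * ‖Lg‖)
    (γ : ℝ) (hγ : 0 < γ)
    (hγcond : D + ‖Lg‖ * R / Real.sqrt γ - 1 / γ ≤ 0)
    (x : ℕ → EuclideanSpace ℝ (Fin n)) (hxX : ∀ t, x t ∈ X)
    (Q : ℕ → EuclideanSpace ℝ (Fin m))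
    (hQ0 : ∀ k, Q 0 k = max 0 (-(g k (x 0))))
    (hQr : ∀ (t : ℕ) (k : Fin m),
      Q (t + 1) k = max (-(g k (x (t + 1)))) (Q t k + g k (x (t + 1))))
    (d : ℕ → EuclideanSpace ℝ (Fin n))
    (hd : ∀ t, d t = Gf (x t) + ∑ k, (Q t k + g k (x t)) • Gg k (x t))
    (hproj : ∀ t, ∀ y ∈ X,
      ‖x (t + 1) - (x t - γ • d t)‖ ≤ ‖y - (x t - γ • d t)‖) :
    ∀ t : ℕ, 1 ≤ t →
      f ((t : ℝ)⁻¹ • ∑ τ ∈ Finset.range t, x (τ + 1)) ≤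
        f xstar + (1 / (t : ℝ)) * (R ^ 2 / (2 * γ)) := by
  set u := fun s => gvec g (x s)
  obtain rfl : Q = virtualQueueVec u := eq_virtualQueueVec hQ0 hQr
  have hR0 : 0 ≤ R := (norm_nonneg _).trans (hR xstar hxs xstar hxs)
  have hfS : IsSmoothConvexOn X f Gf Lf := ⟨hf, fun z _ => hfd z, hGfLip⟩
  have hgS k : IsSmoothConvexOn X (g k) (Gg k) (Lg k) := ⟨hg k, fun z _ => hgd k z, hGgLip k⟩
  set B := 2 * ‖lam‖ + C + R / √γ
  have hstep s (hs : ‖virtualQueueVec u s‖ ≤ B) :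
      ‖virtualQueueVec u (s + 1)‖ ^ 2 / 2 - ‖virtualQueueVec u s‖ ^ 2 / 2 + f (x (s + 1)) ≤
        f xstar + (‖xstar - x s‖ ^ 2 - ‖xstar - x (s + 1)‖ ^ 2) / (2 * γ) +
          (‖u (s + 1)‖ ^ 2 / 2 - ‖u s‖ ^ 2 / 2) :=
    drift_plus_penalty_le hXcv hfS hgS hgLip hγ (hxX s) (hxX (s + 1)) hxs
      (fun k => virtualQueue_add_nonneg _ s) (by simpa only [hd] using hproj s)
      (norm_virtualQueueVec_succ_sq_sub_sq_le u s)
      (lagrangian_smoothness_add_sq_le_inv hs (hgC _ (hxX s)) (hD ▸ hγcond)) hxsFeas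
  have hsum T (hT : ∀ τ < T, ‖virtualQueueVec u τ‖ ≤ B) :
      ‖virtualQueueVec u T‖ ^ 2 / 2 + ∑ τ ∈ range T, f (x (τ + 1)) ≤
        T * f xstar + R ^ 2 / (2 * γ) + ‖u T‖ ^ 2 / 2 :=
    add_sum_range_le_of_telescoping (V := fun τ => ‖virtualQueueVec u τ‖ ^ 2 / 2)
      (W := fun τ => ‖u τ‖ ^ 2 / 2) (e := fun τ => ‖xstar - x τ‖ ^ 2) hγ
      (fun τ hτ => hstep τ (hT τ hτ)) (by gcongr; exact norm_virtualQueueVec_zero_le u)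
      (pow_le_pow_left₀ (norm_nonneg _) (hR xstar hxs _ (hxX 0)) 2) (sq_nonneg _)
  have hdual τ : f xstar ≤ f (x τ) + ⟪lam, u τ⟫ := by
    rw [← lagrangian_eq_add_inner_gvec]
    exact hduality.1 (mem_image_of_mem _ (hxX τ))
  have hQB T : ‖virtualQueueVec u T‖ ≤ B :=
    Nat.strong_induction_on T fun T ih =>
      norm_virtualQueueVec_le_of_sum_le u hlam hdual (hgC _ (hxX T)) hR0 hγ (hsum T ih)
  intro t ht
  refine hf.map_inv_smul_sum_range_le_of_sum_le (fun τ => hxX (τ + 1)) ht ?_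
  obtain ⟨s, rfl⟩ : ∃ s, t = s + 1 := ⟨t - 1, by omega⟩
  have := pow_le_pow_left₀ (norm_nonneg _) (norm_le_norm_virtualQueueVec_succ u s) 2
  linarith [hsum (s + 1) fun τ _ => hQB τ]

/-- Objective value violations: the running average `x̄(t) = (1/t) Σ_{τ=0}^{t−1} x(τ)` satisfies `f(x̄(t)) ≤ f(x*) + (1/t)·R²/(2γ)`.
Indexing convention: `x 0` denotes the initial point `x(−1)` and `x (t+1)`
denotes the iterate `x(t)`; thus at iteration `t` of the paper,
`x(t) = x (t+1)`, `x(t−1) = x t`, and `Q(t) = Q t`. -/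
theorem objective_value_violation_bound {n m : ℕ}
    (X : Set (EuclideanSpace ℝ (Fin n)))
    (hXne : X.Nonempty) (hXcv : Convex ℝ X) (hXcp : IsCompact X)
    (R : ℝ) (hR : ∀ z ∈ X, ∀ w ∈ X, ‖z - w‖ ≤ R)
    (f : EuclideanSpace ℝ (Fin n) → ℝ)
    (Gf : EuclideanSpace ℝ (Fin n) → EuclideanSpace ℝ (Fin n))
    (g : Fin m → EuclideanSpace ℝ (Fin n) → ℝ)
    (Gg : Fin m → EuclideanSpace ℝ (Fin n) → EuclideanSpace ℝ (Fin n))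
    (Lf : ℝ) (Lg : EuclideanSpace ℝ (Fin m)) (β C : ℝ)
    (hf : ConvexOn ℝ X f)
    (hfd : ∀ z, HasGradientAt f (Gf z) z)
    (hLf : 0 ≤ Lf)
    (hGfLip : ∀ z ∈ X, ∀ w ∈ X, ‖Gf z - Gf w‖ ≤ Lf * ‖z - w‖)
    (hg : ∀ k, ConvexOn ℝ X (g k))
    (hgd : ∀ (k : Fin m) z, HasGradientAt (g k) (Gg k z) z)
    (hLg : ∀ k, 0 ≤ Lg k)
    (hGgLip : ∀ (k : Fin m), ∀ z ∈ X, ∀ w ∈ X, ‖Gg k z - Gg k w‖ ≤ Lg k * ‖z - w‖)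
    (hgLip : ∀ z ∈ X, ∀ w ∈ X, ‖gvec g z - gvec g w‖ ≤ β * ‖z - w‖)
    (hgC : ∀ z ∈ X, ‖gvec g z‖ ≤ C)
    (xstar : EuclideanSpace ℝ (Fin n)) (hxs : xstar ∈ X)
    (hxsFeas : ∀ k, g k xstar ≤ 0)
    (hxsOpt : ∀ z ∈ X, (∀ k, g k z ≤ 0) → f xstar ≤ f z)
    (lam : EuclideanSpace ℝ (Fin m)) (hlam : ∀ k, 0 ≤ lam k)
    (hduality : IsGLB ((fun z => f z + ∑ k, lam k * g k z) '' X) (f xstar))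
    (D : ℝ) (hD : D = β ^ 2 + Lf + 2 * ‖lam‖ * ‖Lg‖ + 2 * C * ‖Lg‖)
    (γ : ℝ) (hγ : 0 < γ)
    (hγcond : D + ‖Lg‖ * R / Real.sqrt γ - 1 / γ ≤ 0)
    (x : ℕ → EuclideanSpace ℝ (Fin n)) (hxX : ∀ t, x t ∈ X)
    (Q : ℕ → EuclideanSpace ℝ (Fin m))
    (hQ0 : ∀ k, Q 0 k = max 0 (-(g k (x 0))))
    (hQr : ∀ (t : ℕ) (k : Fin m),
      Q (t + 1) k = max (-(g k (x (t + 1)))) (Q t k + g k (x (t + 1))))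
    (d : ℕ → EuclideanSpace ℝ (Fin n))
    (hd : ∀ t, d t = Gf (x t) + ∑ k, (Q t k + g k (x t)) • Gg k (x t))
    (hproj : ∀ t, ∀ y ∈ X,
      ‖x (t + 1) - (x t - γ • d t)‖ ≤ ‖y - (x t - γ • d t)‖) :
    ∀ t : ℕ, 1 ≤ t →
      f ((t : ℝ)⁻¹ • ∑ τ ∈ Finset.range t, x (τ + 1)) ≤
        f xstar + (1 / (t : ℝ)) * (R ^ 2 / (2 * γ)) :=
  objective_value_violation_bound_general X hXcv R hR f Gf g Gg Lf Lg β C hf hfd hGfLip hg hgd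
    hGgLip hgLip hgC xstar hxs hxsFeas lam hlam hduality D hD γ hγ hγcond x hxX Q hQ0 hQr d hd hproj
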